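/- Let g : ℝ → ℝ be g(θ) = (1+θ)/√(1+θ²), N ≥ 1 an integer, i ∈ Fin N, x ∈ ℝ, and u, v : Fin N → ℝ with values in [0,1], c ∈ [0,1]. Define h(t) = g(t·c·v_i) · (∏_{l≠i} g(u_l·c·v_l)) · x. Then |h′(u_i)| ≤ (√2)^(N−1) · c · v_i · |x|. -/

import Mathlib

/-! By the chain rule the derivative is `g'(θ_i) · c v_i · ∏_{l ≠ i} g(θ_l) · x`. Each factor
`g(θ) ≤ √2` because `(1 + θ)² ≤ 2 (1 + θ²)`, and `g'(θ) = (1 - θ) / (1 + θ²)^{3/2}` has absolute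
value at most `1` for `θ ≥ 0`. -/

noncomputable def g (θ : ℝ) : ℝ := (1 + θ) / Real.sqrt (1 + θ ^ 2)

lemma hasDerivAt_g (θ : ℝ) :
    HasDerivAt g ((1 - θ) / Real.sqrt (1 + θ ^ 2) ^ 3) θ := by
  have hpos : 0 < 1 + θ ^ 2 := by positivity
  have hsq : Real.sqrt (1 + θ ^ 2) ^ 2 = 1 + θ ^ 2 := Real.sq_sqrt hpos.le
  have hnum : HasDerivAt (fun θ : ℝ => 1 + θ) 1 θ := (hasDerivAt_id θ).const_add 1
  have hden : HasDerivAt (fun θ : ℝ => Real.sqrt (1 + θ ^ 2))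
      (2 * θ / (2 * Real.sqrt (1 + θ ^ 2))) θ := by
    simpa using (((hasDerivAt_id θ).pow 2).const_add 1).sqrt hpos.ne'
  refine (hnum.div hden (Real.sqrt_pos.mpr hpos).ne').congr_deriv ?_
  field_simp
  linear_combination hsq

lemma abs_deriv_g_le_one {θ : ℝ} (hθ : 0 ≤ θ) :
    |(1 - θ) / Real.sqrt (1 + θ ^ 2) ^ 3| ≤ 1 := by
  have hs : 1 ≤ Real.sqrt (1 + θ ^ 2) := Real.one_le_sqrt.mpr (by nlinarith)
  -- `(1 - θ)² ≤ 1 + θ²` exactly when `θ ≥ 0`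
  have hnum : |1 - θ| ≤ Real.sqrt (1 + θ ^ 2) := Real.abs_le_sqrt (by nlinarith)
  rw [abs_div, abs_of_nonneg (by positivity : 0 ≤ Real.sqrt (1 + θ ^ 2) ^ 3),
    div_le_one (by positivity)]
  calc |1 - θ| ≤ Real.sqrt (1 + θ ^ 2) := hnum
    _ ≤ Real.sqrt (1 + θ ^ 2) ^ 3 := le_self_pow₀ hs (by norm_num)

lemma abs_g_le_sqrt_two (θ : ℝ) : |g θ| ≤ Real.sqrt 2 := by
  rw [g, abs_div, abs_of_pos (Real.sqrt_pos.mpr (by positivity)),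
    div_le_iff₀ (Real.sqrt_pos.mpr (by positivity)), ← Real.sqrt_mul zero_le_two]
  exact Real.abs_le_sqrt (by nlinarith [sq_nonneg (1 - θ)])

lemma abs_prod_g_le {ι : Type*} (s : Finset ι) (f : ι → ℝ) :
    |∏ l ∈ s, g (f l)| ≤ Real.sqrt 2 ^ s.card := by
  rw [Finset.abs_prod]
  calc ∏ l ∈ s, |g (f l)| ≤ ∏ _l ∈ s, Real.sqrt 2 :=
        Finset.prod_le_prod (fun _ _ => abs_nonneg _) fun l _ => abs_g_le_sqrt_two (f l)
    _ = Real.sqrt 2 ^ s.card := Finset.prod_const _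

theorem deriv_auxiliary_bound_general (N : ℕ) (i : Fin N) (x : ℝ)
    (u v : Fin N → ℝ)
    (hu : ∀ l, u l ∈ Set.Icc (0 : ℝ) 1) (hv : ∀ l, v l ∈ Set.Icc (0 : ℝ) 1)
    (c : ℝ) (hc : c ∈ Set.Icc (0 : ℝ) 1) :
    |deriv (fun t : ℝ =>
        g (t * c * v i) * (∏ l ∈ Finset.univ.erase i, g (u l * c * v l)) * x) (u i)| ≤
      Real.sqrt 2 ^ (N - 1) * c * v i * |x| := by
  set K := ∏ l ∈ Finset.univ.erase i, g (u l * c * v l)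
  have hcv : 0 ≤ c * v i := mul_nonneg hc.1 (hv i).1
  have hθ : 0 ≤ u i * c * v i := by rw [mul_assoc]; exact mul_nonneg (hu i).1 hcv
  have hK : |K| ≤ Real.sqrt 2 ^ (N - 1) := by
    simpa [Finset.card_erase_of_mem] using
      abs_prod_g_le (Finset.univ.erase i) (fun l => u l * c * v l)
  have hderiv : HasDerivAt (fun t => g (t * c * v i) * K * x)
      ((1 - u i * c * v i) / Real.sqrt (1 + (u i * c * v i) ^ 2) ^ 3 * (c * v i) * K * x)
      (u i) := by
    have hlin := (hasDerivAt_id (u i)).mul_const (c * v i)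
    simpa [mul_assoc] using (((hasDerivAt_g _).comp (u i) hlin).mul_const K).mul_const x
  rw [hderiv.deriv, abs_mul, abs_mul, abs_mul, abs_of_nonneg hcv]
  calc _ ≤ 1 * (c * v i) * Real.sqrt 2 ^ (N - 1) * |x| := by
        gcongr
        exact abs_deriv_g_le_one hθ
    _ = Real.sqrt 2 ^ (N - 1) * c * v i * |x| := by ring

theorem deriv_auxiliary_bound (N : ℕ) (hN : 1 ≤ N) (i : Fin N) (x : ℝ)
    (u v : Fin N → ℝ)
    (hu : ∀ l, u l ∈ Set.Icc (0 : ℝ) 1) (hv : ∀ l, v l ∈ Set.Icc (0 : ℝ) 1)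
    (c : ℝ) (hc : c ∈ Set.Icc (0 : ℝ) 1) :
    |deriv (fun t : ℝ =>
        g (t * c * v i) * (∏ l ∈ Finset.univ.erase i, g (u l * c * v l)) * x) (u i)| ≤
      Real.sqrt 2 ^ (N - 1) * c * v i * |x| :=
  deriv_auxiliary_bound_general N i x u v hu hv c hc
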